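/- The function M_O(N,s) = 2^{2Ns} ∏_{j=1}^N Γ(N+j-1)Γ(s+j-1/2) / (Γ(j-1/2) Γ(s+j+N-1)), viewed as a meromorphic function of s, has a simple pole at s = -1/2 with residue h(N) = 2^{-N} Γ(N)^{-1} ∏_{j=1}^N Γ(N+j-1)Γ(j) / (Γ(j-1/2) Γ(j+N-3/2)), for every integer N ≥ 2. -/
import Mathlib


open Finset Filter Complex

/-- `M_O(N,s) = 2^{2Ns} ∏_{j=1}^N Γ(N+j-1)Γ(s+j-1/2)/(Γ(j-1/2)Γ(s+j+N-1))`. -/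
noncomputable def MO (N : ℕ) (s : ℂ) : ℂ :=
  (2 : ℂ) ^ (2 * (N : ℂ) * s) *
    ∏ i ∈ Finset.range N,
      Complex.Gamma ((N : ℂ) + ((i : ℂ) + 1) - 1) * Complex.Gamma (s + ((i : ℂ) + 1) - 1 / 2) /
        (Complex.Gamma (((i : ℂ) + 1) - 1 / 2) * Complex.Gamma (s + ((i : ℂ) + 1) + (N : ℂ) - 1))

/-- `h(N) = 2^{-N} Γ(N)^{-1} ∏_{j=1}^N Γ(N+j-1)Γ(j)/(Γ(j-1/2)Γ(j+N-3/2))`. -/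
noncomputable def hConst (N : ℕ) : ℂ :=
  (2 : ℂ) ^ (-(N : ℂ)) * (Complex.Gamma N)⁻¹ *
    ∏ i ∈ Finset.range N,
      Complex.Gamma ((N : ℂ) + ((i : ℂ) + 1) - 1) * Complex.Gamma ((i : ℂ) + 1) /
        (Complex.Gamma (((i : ℂ) + 1) - 1 / 2) * Complex.Gamma (((i : ℂ) + 1) + (N : ℂ) - 3 / 2))

private lemma ne_neg_nat' {z : ℂ} (h : 0 < z.re) : ∀ m : ℕ, z ≠ -(m:ℂ) := by
  intro m hz
  rw [hz] at h
  simp only [Complex.neg_re, Complex.natCast_re] at h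
  have : (0:ℝ) ≤ m := Nat.cast_nonneg m
  linarith

private lemma gammaNZ {z : ℂ} (h : 0 < z.re) : Complex.Gamma z ≠ 0 :=
  Complex.Gamma_ne_zero_of_re_pos h

private lemma contGamma {z : ℂ} (h : 0 < z.re) : ContinuousAt Complex.Gamma z :=
  (Complex.differentiableAt_Gamma z (ne_neg_nat' h)).continuousAt

private lemma contGammaComp {φ : ℂ → ℂ} {c : ℂ} (hφ : ContinuousAt φ c) (h : 0 < (φ c).re) :
    ContinuousAt (fun s => Complex.Gamma (φ s)) c :=
  (contGamma h).comp hφ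

/-- For every integer `N ≥ 2`, the meromorphic function `s ↦ M_O(N,s)` has a simple pole
at `s = -1/2` with residue `h(N)`: that is, `(s + 1/2) M_O(N,s) → h(N) ≠ 0` as `s → -1/2`. -/
theorem stmt_5 (N : ℕ) (hN : 2 ≤ N) :
    hConst N ≠ 0 ∧
      Tendsto (fun s : ℂ => (s + 1 / 2) * MO N s)
        (nhdsWithin (-(1 / 2) : ℂ) {(-(1 / 2) : ℂ)}ᶜ) (nhds (hConst N)) := by
  have hNpos : 0 < N := by omega
  constructor
  · unfold hConst
    refine mul_ne_zero (mul_ne_zero ?_ ?_) ?_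
    · simp [Complex.cpow_eq_zero_iff]
    · refine inv_ne_zero (gammaNZ ?_)
      simp only [Complex.natCast_re]
      exact_mod_cast hNpos
    · refine Finset.prod_ne_zero_iff.mpr fun i hi => ?_
      refine div_ne_zero (mul_ne_zero (gammaNZ ?_) (gammaNZ ?_))
        (mul_ne_zero (gammaNZ ?_) (gammaNZ ?_)) <;>
      · simp only [Complex.add_re, Complex.sub_re, Complex.one_re, Complex.natCast_re]
        norm_num
        try linarith [Nat.cast_nonneg (α := ℝ) i, show (2:ℝ) ≤ N from by exact_mod_cast hN]
  · obtain ⟨M, rfl⟩ : ∃ M, N = M + 1 := ⟨N - 1, by omega⟩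
    set f : ℕ → ℂ → ℂ := fun i s =>
      Complex.Gamma (((M+1:ℕ) : ℂ) + ((i : ℂ) + 1) - 1) * Complex.Gamma (s + ((i : ℂ) + 1) - 1 / 2) /
        (Complex.Gamma (((i : ℂ) + 1) - 1 / 2) *
          Complex.Gamma (s + ((i : ℂ) + 1) + ((M+1:ℕ) : ℂ) - 1)) with hf
    set g : ℂ → ℂ := fun s =>
      (2 : ℂ) ^ (2 * ((M+1:ℕ) : ℂ) * s) *
        ((∏ i ∈ Finset.range M, f (i+1) s) *
          (Complex.Gamma (((M+1:ℕ) : ℂ) + (((0:ℕ) : ℂ) + 1) - 1) *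
            Complex.Gamma (s + 1/2 + 1) /
              (Complex.Gamma ((((0:ℕ) : ℂ) + 1) - 1 / 2) *
                Complex.Gamma (s + (((0:ℕ) : ℂ) + 1) + ((M+1:ℕ) : ℂ) - 1)))) with hg
    have key : ∀ s : ℂ, s ≠ -(1/2 : ℂ) → (s + 1/2) * MO (M+1) s = g s := by
      intro s hs
      have hz : s + 1/2 ≠ 0 := fun h => hs (by linear_combination h)
      rw [hg]
      simp only [MO, Finset.prod_range_succ']
      rw [Complex.Gamma_add_one _ hz]
      rw [show s + (((0:ℕ):ℂ) + 1) - 1/2 = s + 1/2 by push_cast; ring]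
      ring
    have hcont : ContinuousAt g (-(1/2 : ℂ)) := by
      rw [hg]
      refine ContinuousAt.mul (continuousAt_const_cpow two_ne_zero |>.comp ?_) ?_
      · exact (continuousAt_const.mul continuousAt_id)
      refine ContinuousAt.mul ?_ ?_
      · refine tendsto_finset_prod _ fun i _ => ?_
        refine ContinuousAt.div (ContinuousAt.mul continuousAt_const ?_) ?_ ?_
        · refine contGammaComp (by fun_prop) ?_
          simp only [Complex.add_re, Complex.sub_re, Complex.one_re, Complex.natCast_re,
            Complex.neg_re]
          push_cast
          norm_num
          try positivity
          try linarith [Nat.cast_nonneg (α := ℝ) i, Nat.cast_nonneg (α := ℝ) M]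
        · refine continuousAt_const.mul (contGammaComp (by fun_prop) ?_)
          simp only [Complex.add_re, Complex.sub_re, Complex.one_re, Complex.natCast_re,
            Complex.neg_re]
          push_cast
          norm_num
          try positivity
          try linarith [Nat.cast_nonneg (α := ℝ) i, Nat.cast_nonneg (α := ℝ) M]
        · refine mul_ne_zero (gammaNZ ?_) (gammaNZ ?_)
          · simp only [Complex.add_re, Complex.sub_re, Complex.one_re, Complex.natCast_re]
            push_cast; norm_num
            linarith [Nat.cast_nonneg (α := ℝ) i]
          · simp only [Complex.add_re, Complex.sub_re, Complex.one_re, Complex.natCast_re,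
              Complex.neg_re]
            push_cast; norm_num
            linarith [Nat.cast_nonneg (α := ℝ) i, Nat.cast_nonneg (α := ℝ) M]
      · refine ContinuousAt.div (ContinuousAt.mul continuousAt_const ?_)
          (continuousAt_const.mul (contGammaComp (by fun_prop) ?_)) ?_
        · refine contGammaComp (by fun_prop) ?_
          norm_num
        · simp only [Complex.add_re, Complex.sub_re, Complex.one_re, Complex.natCast_re,
            Complex.neg_re]
          push_cast; norm_num
          linarith [Nat.cast_nonneg (α := ℝ) M]
        · refine mul_ne_zero (gammaNZ ?_) (gammaNZ ?_)
          · norm_num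
          · simp only [Complex.add_re, Complex.sub_re, Complex.one_re, Complex.natCast_re,
              Complex.neg_re]
            push_cast; norm_num
            linarith [Nat.cast_nonneg (α := ℝ) M]
    have hval : g (-(1/2 : ℂ)) = hConst (M+1) := by
      have hfacne : ((Nat.factorial M : ℂ)) ≠ 0 := Nat.cast_ne_zero.mpr (Nat.factorial_ne_zero M)
      have hterm : ∀ i ∈ Finset.range M,
          Complex.Gamma (((M+1:ℕ):ℂ) + (((i+1:ℕ):ℂ) + 1) - 1) * Complex.Gamma (((i+1:ℕ):ℂ) + 1) /
            (Complex.Gamma ((((i+1:ℕ):ℂ) + 1) - 1 / 2) *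
              Complex.Gamma ((((i+1:ℕ):ℂ) + 1) + ((M+1:ℕ):ℂ) - 3 / 2)) =
          ((i:ℂ) + 1) * f (i+1) (-(1/2 : ℂ)) := by
        intro i _
        rw [hf]
        simp only []
        rw [Complex.Gamma_add_one ((i+1:ℕ):ℂ) (Nat.cast_ne_zero.mpr (Nat.succ_ne_zero i))]
        rw [show (-(1/2:ℂ)) + (((i+1:ℕ):ℂ) + 1) - 1/2 = ((i+1:ℕ):ℂ) by push_cast; ring]
        rw [show (-(1/2:ℂ)) + (((i+1:ℕ):ℂ) + 1) + ((M+1:ℕ):ℂ) - 1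
            = (((i+1:ℕ):ℂ) + 1) + ((M+1:ℕ):ℂ) - 3/2 by push_cast; ring]
        push_cast
        ring
      have hfac : ∏ i ∈ Finset.range M, ((i:ℂ) + 1) = (Nat.factorial M : ℂ) := by
        rw [← Finset.prod_range_add_one_eq_factorial M]
        push_cast
        rfl
      have hg1 : Complex.Gamma ((M+1:ℕ):ℂ) = (Nat.factorial M : ℂ) := by
        push_cast
        exact Complex.Gamma_nat_eq_factorial M
      rw [hg, hConst]
      simp only [Finset.prod_range_succ']
      rw [Finset.prod_congr rfl hterm, Finset.prod_mul_distrib, hfac, hg1]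
      rw [show (2:ℂ) * ((M+1:ℕ):ℂ) * (-(1/2)) = -((M+1:ℕ):ℂ) by push_cast; ring]
      rw [show (-(1/2:ℂ)) + 1/2 + 1 = 1 by ring, Complex.Gamma_one]
      rw [show (-(1/2:ℂ)) + (((0:ℕ):ℂ) + 1) + ((M+1:ℕ):ℂ) - 1
          = ((((0:ℕ):ℂ)) + 1) + ((M+1:ℕ):ℂ) - 3/2 by push_cast; ring]
      rw [show Complex.Gamma (((0:ℕ):ℂ) + 1) = 1 by norm_num [Complex.Gamma_one]]
      linear_combination (-((2:ℂ) ^ (-((M+1:ℕ):ℂ)) *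
          ((∏ i ∈ Finset.range M, f (i+1) (-(1/2:ℂ))) *
            (Complex.Gamma (((M+1:ℕ):ℂ) + (((0:ℕ):ℂ) + 1) - 1) * 1 /
              (Complex.Gamma ((((0:ℕ):ℂ) + 1) - 1 / 2) *
                Complex.Gamma ((((0:ℕ):ℂ) + 1) + ((M+1:ℕ):ℂ) - 3 / 2)))))) *
        (inv_mul_cancel₀ hfacne)
    refine tendsto_nhdsWithin_congr (fun s hs => (key s hs).symm) ?_
    rw [← hval]
    exact hcont.continuousWithinAt.tendsto
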